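/- The family of operators { R^{g_1}_1 ⋯ R^{g_n}_n · S̃^{(h_1)}_1 ⋯ S̃^{(h_{n−1})}_{n−1} : (g_1,…,g_n) ∈ G^n, (h_1,…,h_{n−1}) ∈ G^{n−1} } is a ℂ-basis of the smooth boundary algebra 𝔇ⁿ_smooth; in particular dim_ℂ 𝔇ⁿ_smooth = |G|^{2n−1}. -/

import Mathlib

set_option linter.unusedSectionVars false
set_option maxHeartbeats 1000000


noncomputable section

open scoped BigOperators

/-- The Hilbert space `H_n = ℂ[G]^{⊗ n}`, realized as functions `G^n → ℂ`;
the basis ket `|g₁,…,g_n⟩` is the indicator function of `(g₁,…,g_n)`. -/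
abbrev Hn (G : Type) (n : ℕ) : Type := (Fin n → G) → ℂ

variable (G : Type) [Group G] [Fintype G] [DecidableEq G] (n : ℕ)

/-- Diagonal operator with diagonal entries `c` (in the ket basis). -/
def diagOp (c : (Fin n → G) → ℂ) : Module.End ℂ (Hn G n) where
  toFun f := fun x => c x * f x
  map_add' f g := by funext x; simp only [Pi.add_apply]; ring
  map_smul' r f := by
    funext x
    simp only [Pi.smul_apply, smul_eq_mul, RingHom.id_apply]
    ring

/-- The operator sending the ket `|y⟩` to the ket `|σ y⟩`, where `τ = σ⁻¹`. -/
def permOp (τ : (Fin n → G) → (Fin n → G)) : Module.End ℂ (Hn G n) :=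
  LinearMap.funLeft ℂ ℂ τ

/-- `R^g_i`: right translation at site `i`, `|…, g_i, …⟩ ↦ |…, g_i g, …⟩`. -/
def Rop (i : Fin n) (g : G) : Module.End ℂ (Hn G n) :=
  permOp G n fun x => Function.update x i (x i * g⁻¹)

/-- `S̃^{(h)}` at sites `i` and `j` (used with `j = i + 1`): the projection onto
kets with `g_i⁻¹ g_j = h`. -/
def Sop (i j : Fin n) (h : G) : Module.End ℂ (Hn G n) :=
  diagOp G n fun x => if (x i)⁻¹ * x j = h then 1 else 0

/-- `U_g`: the diagonal left translation `|g₁,…,g_n⟩ ↦ |g g₁,…,g g_n⟩`. -/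
def Uop (g : G) : Module.End ℂ (Hn G n) :=
  permOp G n fun x k => g⁻¹ * x k

/-- Generators `R^g_i` and `S̃^{(h)}_i` of the smooth boundary algebra. -/
def smoothGens : Set (Module.End ℂ (Hn G n)) :=
  {T | ∃ (i : Fin n) (g : G), T = Rop G n i g} ∪
  {T | ∃ (i j : Fin n) (h : G), (i : ℕ) + 1 = (j : ℕ) ∧ T = Sop G n i j h}

/-- The smooth boundary algebra `𝔇ⁿ_smooth`. -/
def DSmooth : Subalgebra ℂ (Module.End ℂ (Hn G n)) :=
  Algebra.adjoin ℂ (smoothGens G n)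

/-- The site `i` (0-indexed) of a neighboring pair, as an element of `Fin n`. -/
def idx1 {n : ℕ} (i : Fin (n - 1)) : Fin n := ⟨i, by have := i.isLt; omega⟩

/-- The site `i + 1` of a neighboring pair, as an element of `Fin n`. -/
def idx2 {n : ℕ} (i : Fin (n - 1)) : Fin n := ⟨(i : ℕ) + 1, by have := i.isLt; omega⟩

/-- The word `R^{g₁}_1 ⋯ R^{g_n}_n · S̃^{(h₁)}_1 ⋯ S̃^{(h_{n-1})}_{n-1}`. -/
def smoothWord (g : Fin n → G) (h : Fin (n - 1) → G) : Module.End ℂ (Hn G n) :=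
  (List.ofFn fun i : Fin n => Rop G n i (g i)).prod *
  (List.ofFn fun i : Fin (n - 1) => Sop G n (idx1 i) (idx2 i) (h i)).prod

-- auxiliary lemmas


lemma diagOp_apply (c : (Fin n → G) → ℂ) (f : Hn G n) (x) : diagOp G n c f x = c x * f x := rfl
lemma permOp_apply (τ) (f : Hn G n) (x) : permOp G n τ f x = f (τ x) := rfl

lemma permOp_mul (τ σ) : permOp G n τ * permOp G n σ = permOp G n (σ ∘ τ) := rfl

lemma diagOp_mul (c d) : diagOp G n c * diagOp G n d = diagOp G n (fun x => c x * d x) := by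
  apply LinearMap.ext; intro f; funext x
  simp only [Module.End.mul_apply, diagOp_apply]; ring

def tauMap (g : Fin n → G) : (Fin n → G) → (Fin n → G) := fun x k => x k * (g k)⁻¹

def dvec (x : Fin n → G) : Fin (n - 1) → G := fun i => (x (idx1 i))⁻¹ * x (idx2 i)

def chain (h : Fin (n - 1) → G) : (Fin n → G) → ℂ :=
  fun x => if h = dvec G n x then 1 else 0

lemma prod_permOp (l : List ((Fin n → G) → (Fin n → G))) :
    (l.map (permOp G n)).prod = permOp G n (fun x => l.foldl (fun y t => t y) x) := by
  induction l with
  | nil =>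
      apply LinearMap.ext; intro f; rfl
  | cons a t ih =>
      rw [List.map_cons, List.prod_cons, ih, permOp_mul]
      rfl

lemma prod_diagOp (l : List ((Fin n → G) → ℂ)) :
    (l.map (diagOp G n)).prod = diagOp G n (fun x => (l.map fun c => c x).prod) := by
  induction l with
  | nil =>
      apply LinearMap.ext; intro f; funext x
      simp [diagOp_apply]
  | cons a t ih =>
      rw [List.map_cons, List.prod_cons, ih, diagOp_mul]
      simp [List.map_cons]

lemma foldl_update (g : Fin n → G) (l : List (Fin n)) (hl : l.Nodup) (x : Fin n → G) :
    l.foldl (fun y i => Function.update y i (y i * (g i)⁻¹)) x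
      = fun k => if k ∈ l then x k * (g k)⁻¹ else x k := by
  induction l generalizing x with
  | nil => simp
  | cons a t ih =>
      have hna : a ∉ t := (List.nodup_cons.mp hl).1
      rw [List.foldl_cons, ih (List.nodup_cons.mp hl).2]
      funext k
      by_cases hk : k ∈ t
      · have hka : k ≠ a := fun e => hna (e ▸ hk)
        simp [hk, Function.update_of_ne hka]
      · by_cases hka : k = a
        · subst hka; simp [hk, hna]
        · simp [hk, hka, Function.update_of_ne hka]

lemma Rprod_eq (g : Fin n → G) :
    (List.ofFn fun i : Fin n => Rop G n i (g i)).prod = permOp G n (tauMap G n g) := by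
  have h1 : (List.ofFn fun i : Fin n => Rop G n i (g i))
      = ((List.finRange n).map (fun i : Fin n => fun x : Fin n → G =>
          Function.update x i (x i * (g i)⁻¹))).map (permOp G n) := by
    rw [List.map_map, List.ofFn_eq_map]
    rfl
  rw [h1, prod_permOp]
  congr 1
  funext x
  rw [List.foldl_map]
  rw [foldl_update G n g _ (List.nodup_finRange n) x]
  funext k
  simp [tauMap, List.mem_finRange]

lemma Sprod_eq (h : Fin (n - 1) → G) :
    (List.ofFn fun i : Fin (n - 1) => Sop G n (idx1 i) (idx2 i) (h i)).prod
      = diagOp G n (chain G n h) := by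
  have h1 : (List.ofFn fun i : Fin (n-1) => Sop G n (idx1 i) (idx2 i) (h i))
      = ((List.finRange (n-1)).map (fun i : Fin (n-1) => fun x : Fin n → G =>
          if (x (idx1 i))⁻¹ * x (idx2 i) = h i then (1:ℂ) else 0)).map (diagOp G n) := by
    rw [List.map_map, List.ofFn_eq_map]
    rfl
  rw [h1, prod_diagOp]
  congr 1
  funext x
  rw [List.map_map, ← List.ofFn_eq_map, List.prod_ofFn]
  simp only [Function.comp]
  rw [Finset.prod_boole]
  have : (∀ i ∈ Finset.univ, (x (idx1 i))⁻¹ * x (idx2 i) = h i) ↔ h = dvec G n x := by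
    constructor
    · intro H; funext i; exact (H i (Finset.mem_univ i)).symm
    · intro H i _; rw [H]; rfl
  simp only [chain]
  by_cases hc : h = dvec G n x
  · rw [if_pos (this.mpr hc), if_pos hc]
  · rw [if_neg (fun H => hc (this.mp H)), if_neg hc]

lemma smoothWord_eq (g h) :
    smoothWord G n g h = permOp G n (tauMap G n g) * diagOp G n (chain G n h) := by
  rw [smoothWord, Rprod_eq, Sprod_eq]

lemma smoothWord_apply (g h) (f : Hn G n) (x) :
    smoothWord G n g h f x = chain G n h (tauMap G n g x) * f (tauMap G n g x) := by
  rw [smoothWord_eq]; rfl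

lemma sum_chain (x : Fin n → G) : ∑ h : Fin (n - 1) → G, chain G n h x = 1 := by
  rw [show (∑ h : Fin (n-1) → G, chain G n h x)
      = ∑ h : Fin (n-1) → G, if h = dvec G n x then (1:ℂ) else 0 from rfl]
  rw [Finset.sum_ite_eq' Finset.univ (dvec G n x) (fun _ => (1:ℂ))]
  simp

lemma words_li :
    LinearIndependent ℂ
      (fun gh : (Fin n → G) × (Fin (n - 1) → G) => smoothWord G n gh.1 gh.2) := by
  rw [Fintype.linearIndependent_iff]
  intro c hc gh0
  obtain ⟨g0, h0⟩ := gh0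
  set y0 : Fin n → G := fun k => ((List.ofFn h0).take k).prod with hy0
  have key : dvec G n y0 = h0 := by
    funext i
    have hlen : (i : ℕ) < (List.ofFn h0).length := by
      rw [List.length_ofFn]; exact i.isLt
    have h2 : y0 (idx2 i) = y0 (idx1 i) * h0 i := by
      show ((List.ofFn h0).take ((i:ℕ)+1)).prod = _
      rw [List.prod_take_succ _ _ hlen, List.getElem_ofFn]
      rfl
    show (y0 (idx1 i))⁻¹ * y0 (idx2 i) = h0 i
    rw [h2, inv_mul_cancel_left]
  set e : Hn G n := fun z => if z = y0 then (1:ℂ) else 0 with he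
  set x0 : Fin n → G := fun k => y0 k * g0 k with hx0
  have h2 : (∑ gh : (Fin n → G) × (Fin (n-1) → G),
      c gh • smoothWord G n gh.1 gh.2) e x0 = 0 := by rw [hc]; rfl
  rw [LinearMap.sum_apply] at h2
  rw [Finset.sum_apply] at h2
  simp only [LinearMap.smul_apply, Pi.smul_apply, smul_eq_mul, smoothWord_apply] at h2
  have htau0 : tauMap G n g0 x0 = y0 := by
    funext k; show y0 k * g0 k * (g0 k)⁻¹ = y0 k; rw [mul_inv_cancel_right]
  rw [Finset.sum_eq_single ((g0, h0) : (Fin n → G) × (Fin (n-1) → G))] at h2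
  · simp only at h2
    rw [htau0] at h2
    have hch : chain G n h0 y0 = 1 := by rw [chain, if_pos key.symm]
    have hee : e y0 = 1 := by rw [he]; simp
    rw [hch, hee] at h2
    simpa using h2
  · rintro ⟨g, h⟩ - hne
    simp only
    by_cases hte : tauMap G n g x0 = y0
    · have hg : g = g0 := by
        funext k
        have hk := congrFun hte k
        have hk' : y0 k * g0 k * (g k)⁻¹ = y0 k := hk
        rw [mul_assoc, mul_eq_left, mul_inv_eq_one] at hk'
        exact hk'.symm
      by_cases hcd : h = dvec G n y0
      · exact absurd (by rw [hg, hcd, key]) hne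
      · rw [hte, chain, if_neg hcd]
        ring
    · have : e (tauMap G n g x0) = 0 := by rw [he]; simp [hte]
      rw [this]
      ring
  · intro hmem; exact absurd (Finset.mem_univ _) hmem

-- membership of words in DSmooth
lemma word_mem (g h) : smoothWord G n g h ∈ DSmooth G n := by
  apply Subalgebra.mul_mem
  · apply list_prod_mem
    intro T hT
    rw [List.mem_ofFn] at hT
    obtain ⟨i, rfl⟩ := hT
    exact Algebra.subset_adjoin (Or.inl ⟨i, g i, rfl⟩)
  · apply list_prod_mem
    intro T hT
    rw [List.mem_ofFn] at hT
    obtain ⟨i, rfl⟩ := hT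
    exact Algebra.subset_adjoin (Or.inr ⟨idx1 i, idx2 i, h i, rfl, rfl⟩)


def wordSpan : Submodule ℂ (Module.End ℂ (Hn G n)) :=
  Submodule.span ℂ
    (Set.range fun gh : (Fin n → G) × (Fin (n - 1) → G) => smoothWord G n gh.1 gh.2)

lemma word_mem_span (g h) : smoothWord G n g h ∈ wordSpan G n :=
  Submodule.subset_span ⟨(g, h), rfl⟩

lemma one_eq_sum :
    (1 : Module.End ℂ (Hn G n)) = ∑ h : Fin (n-1) → G, smoothWord G n (fun _ => 1) h := by
  apply LinearMap.ext; intro f; funext x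
  rw [LinearMap.sum_apply, Finset.sum_apply]
  simp only [smoothWord_apply]
  have ht : tauMap G n (fun _ => (1:G)) x = x := by funext k; simp [tauMap]
  rw [show (∑ h : Fin (n-1) → G, chain G n h (tauMap G n (fun _ => 1) x) *
      f (tauMap G n (fun _ => 1) x))
      = (∑ h : Fin (n-1) → G, chain G n h x) * f x by rw [ht, Finset.sum_mul]]
  rw [sum_chain, one_mul]
  rfl

lemma one_mem_span : (1 : Module.End ℂ (Hn G n)) ∈ wordSpan G n := by
  rw [one_eq_sum]
  exact Submodule.sum_mem _ fun h _ => word_mem_span G n _ h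

lemma Rop_eq_sum (i : Fin n) (g0 : G) :
    Rop G n i g0 = ∑ h : Fin (n-1) → G, smoothWord G n (fun k => if k = i then g0 else 1) h := by
  apply LinearMap.ext; intro f; funext x
  rw [LinearMap.sum_apply, Finset.sum_apply]
  simp only [smoothWord_apply]
  rw [← Finset.sum_mul, sum_chain, one_mul]
  show f (Function.update x i (x i * g0⁻¹)) = f _
  congr 1
  funext k
  by_cases hk : k = i
  · subst hk; simp [tauMap]
  · simp [tauMap, hk, Function.update_of_ne hk]

lemma Rop_mem_span (i : Fin n) (g0 : G) : Rop G n i g0 ∈ wordSpan G n := by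
  rw [Rop_eq_sum]
  exact Submodule.sum_mem _ fun h _ => word_mem_span G n _ h

lemma Sop_eq_sum (i j : Fin n) (hij : (i : ℕ) + 1 = (j : ℕ)) (h0 : G) :
    Sop G n i j h0 = ∑ h : Fin (n-1) → G,
      if h ⟨(i : ℕ), by have := j.isLt; omega⟩ = h0 then smoothWord G n (fun _ => 1) h else 0 := by
  set i' : Fin (n-1) := ⟨(i : ℕ), by have := j.isLt; omega⟩ with hi'
  have hidx1 : idx1 i' = i := by apply Fin.ext; rfl
  have hidx2 : idx2 i' = j := by apply Fin.ext; exact hij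
  apply LinearMap.ext; intro f; funext x
  rw [LinearMap.sum_apply, Finset.sum_apply]
  have ht : tauMap G n (fun _ => (1:G)) x = x := by funext k; simp [tauMap]
  have hterm : ∀ h : Fin (n-1) → G,
      ((if h i' = h0 then smoothWord G n (fun _ => 1) h else 0) f) x
        = if h i' = h0 then chain G n h x * f x else 0 := by
    intro h
    by_cases hc : h i' = h0
    · rw [if_pos hc, if_pos hc, smoothWord_apply, ht]
    · rw [if_neg hc, if_neg hc]; rfl
  rw [Finset.sum_congr rfl fun h _ => hterm h]
  rw [Finset.sum_eq_single (dvec G n x)]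
  · show (if (x i)⁻¹ * x j = h0 then (1:ℂ) else 0) * f x = _
    have hdi : dvec G n x i' = (x i)⁻¹ * x j := by rw [dvec, hidx1, hidx2]
    rw [hdi, chain, if_pos rfl]
    by_cases hc : (x i)⁻¹ * x j = h0
    · rw [if_pos hc, if_pos hc, one_mul]
    · rw [if_neg hc, if_neg hc, zero_mul]
  · intro h _ hne
    by_cases hc : h i' = h0
    · rw [if_pos hc, chain, if_neg hne, zero_mul]
    · rw [if_neg hc]
  · intro hmem; exact absurd (Finset.mem_univ _) hmem

lemma Sop_mem_span (i j : Fin n) (hij : (i : ℕ) + 1 = (j : ℕ)) (h0 : G) :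
    Sop G n i j h0 ∈ wordSpan G n := by
  rw [Sop_eq_sum G n i j hij h0]
  refine Submodule.sum_mem _ fun h _ => ?_
  by_cases hc : h ⟨(i : ℕ), by have := j.isLt; omega⟩ = h0
  · rw [if_pos hc]; exact word_mem_span G n _ h
  · rw [if_neg hc]; exact Submodule.zero_mem _

lemma word_mul_mem (g h g' h') :
    smoothWord G n g h * smoothWord G n g' h' ∈ wordSpan G n := by
  have htt : ∀ x, tauMap G n g' (tauMap G n g x) = tauMap G n (fun k => g' k * g k) x := by
    intro x; funext k; simp [tauMap, mul_inv_rev, mul_assoc]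
  have hdv : ∀ x i, dvec G n (tauMap G n (fun k => g' k * g k) x) i
      = g' (idx1 i) * dvec G n (tauMap G n g x) i * (g' (idx2 i))⁻¹ := by
    intro x i
    simp only [dvec, tauMap]
    group
  by_cases hcase : (fun i => g' (idx1 i) * h i * (g' (idx2 i))⁻¹) = h'
  · have heq : smoothWord G n g h * smoothWord G n g' h'
        = smoothWord G n (fun k => g' k * g k) h' := by
      apply LinearMap.ext; intro f; funext x
      rw [Module.End.mul_apply]
      simp only [smoothWord_apply]
      rw [htt x]
      have hiff : h = dvec G n (tauMap G n g x)
          ↔ h' = dvec G n (tauMap G n (fun k => g' k * g k) x) := by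
        constructor
        · intro hh
          funext i
          rw [hdv x i, ← hh, ← congrFun hcase i]
        · intro hh
          funext i
          have h1 := congrFun hh i
          rw [hdv x i] at h1
          have h2 := congrFun hcase i
          rw [← h2] at h1
          exact mul_left_cancel (mul_right_cancel h1)
      have hch : chain G n h (tauMap G n g x)
          = chain G n h' (tauMap G n (fun k => g' k * g k) x) := by
        rw [chain, chain]
        by_cases hc : h = dvec G n (tauMap G n g x)
        · rw [if_pos hc, if_pos (hiff.mp hc)]
        · rw [if_neg hc, if_neg (fun H => hc (hiff.mpr H))]
      rw [hch]
      rw [chain]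
      split
      · ring
      · ring
    rw [heq]
    exact word_mem_span G n _ _
  · have heq : smoothWord G n g h * smoothWord G n g' h' = 0 := by
      apply LinearMap.ext; intro f; funext x
      rw [Module.End.mul_apply]
      simp only [smoothWord_apply]
      rw [htt x]
      by_cases c1 : h = dvec G n (tauMap G n g x)
      · by_cases c2 : h' = dvec G n (tauMap G n (fun k => g' k * g k) x)
        · exfalso
          apply hcase
          funext i
          show g' (idx1 i) * h i * (g' (idx2 i))⁻¹ = h' i
          rw [congrFun c1 i, congrFun c2 i, hdv x i]
        · rw [show chain G n h' (tauMap G n (fun k => g' k * g k) x) = 0 from by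
            rw [chain, if_neg c2]]
          show _ * ((0:ℂ) * _) = (0 : Module.End ℂ (Hn G n)) f x
          rw [zero_mul, mul_zero]
          rfl
      · rw [chain, if_neg c1]
        show (0 : ℂ) * _ = (0 : Module.End ℂ (Hn G n)) f x
        rw [zero_mul]
        rfl
    rw [heq]
    exact Submodule.zero_mem _

lemma span_mul_mem : ∀ a b : Module.End ℂ (Hn G n),
    a ∈ wordSpan G n → b ∈ wordSpan G n → a * b ∈ wordSpan G n := by
  have hle : wordSpan G n * wordSpan G n ≤ wordSpan G n := by
    rw [wordSpan, Submodule.span_mul_span, Submodule.span_le]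
    rintro t ht
    rw [Set.mem_mul] at ht
    obtain ⟨a, ⟨gh, rfl⟩, b, ⟨gh', rfl⟩, rfl⟩ := ht
    exact word_mul_mem G n gh.1 gh.2 gh'.1 gh'.2
  intro a b ha hb
  exact hle (Submodule.mul_mem_mul ha hb)

lemma gens_sub : smoothGens G n ⊆
    ((wordSpan G n).toSubalgebra (one_mem_span G n) (span_mul_mem G n) :
      Subalgebra ℂ (Module.End ℂ (Hn G n))) := by
  rintro T (⟨i, g0, rfl⟩ | ⟨i, j, h0, hij, rfl⟩)
  · exact Rop_mem_span G n i g0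
  · exact Sop_mem_span G n i j hij h0

lemma span_eq : wordSpan G n = Subalgebra.toSubmodule (DSmooth G n) := by
  apply le_antisymm
  · rw [wordSpan, Submodule.span_le]
    rintro _ ⟨gh, rfl⟩
    exact word_mem G n gh.1 gh.2
  · have hle : DSmooth G n ≤ (wordSpan G n).toSubalgebra (one_mem_span G n) (span_mul_mem G n) :=
      Algebra.adjoin_le (gens_sub G n)
    intro a ha
    exact hle ha


/-- the family of words `R^{g₁}_1 ⋯ R^{g_n}_n S̃^{(h₁)}_1 ⋯ S̃^{(h_{n-1})}_{n-1}`
is a ℂ-basis of `𝔇ⁿ_smooth`; in particular `dim_ℂ 𝔇ⁿ_smooth = |G|^(2n-1)`. -/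
theorem stmt8 (hn : 1 ≤ n) :
    LinearIndependent ℂ
      (fun gh : (Fin n → G) × (Fin (n - 1) → G) => smoothWord G n gh.1 gh.2) ∧
    Submodule.span ℂ
        (Set.range fun gh : (Fin n → G) × (Fin (n - 1) → G) => smoothWord G n gh.1 gh.2) =
      Subalgebra.toSubmodule (DSmooth G n) ∧
    Module.finrank ℂ ↥(DSmooth G n) = Fintype.card G ^ (2 * n - 1) := by
  refine ⟨words_li G n, span_eq G n, ?_⟩
  rw [← Subalgebra.finrank_toSubmodule, ← span_eq G n, wordSpan,
    finrank_span_eq_card (words_li G n)]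
  rw [Fintype.card_prod, Fintype.card_fun, Fintype.card_fun, Fintype.card_fin, Fintype.card_fin,
    ← pow_add]
  congr 1
  omega
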